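/- arXiv:1909.10689 — 2 statements merged into one kernel-verified Lean document; each statement's English description precedes it below -/
import Mathlib

section
/- Let α > 1 - 1/p, 1 < p < ∞, R > e. There exist positive constants C₅ and L such that for every u ∈ C_c^∞((0,1]): ∫₀¹ (|u'|^p − Λ_{α,p}|u/t|^p) t^{αp} dt + L|u(1)|^p ≥ C₅ ∫₀¹ |u/t|^p t^{αp} (log(R/t))^{-2} dt. -/
open MeasureTheory Real Set Filter Topology

lemma abs_mul_abs_rpow {p : ℝ} (hp : 1 < p) (y : ℝ) :
    |y * |y| ^ (p - 2)| = |y| ^ (p - 1) := by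
  rcases eq_or_ne y 0 with rfl | hy
  · simp [Real.zero_rpow (by linarith : p - 1 ≠ 0)]
  · have h0 : (0:ℝ) < |y| := abs_pos.mpr hy
    rw [abs_mul, abs_of_nonneg (Real.rpow_nonneg (abs_nonneg y) _)]
    rw [show p - 1 = 1 + (p - 2) by ring, Real.rpow_add h0, Real.rpow_one]

lemma continuous_mul_abs_rpow {p : ℝ} (hp : 1 < p) :
    Continuous fun y : ℝ => y * |y| ^ (p - 2) := by
  rw [continuous_iff_continuousAt]
  intro y
  rcases eq_or_ne y 0 with rfl | hy
  · have hval : (fun y : ℝ => y * |y| ^ (p - 2)) 0 = 0 := by simp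
    unfold ContinuousAt
    rw [hval]
    apply squeeze_zero_norm (fun z => (abs_mul_abs_rpow hp z).le)
    have hcont : ContinuousAt (fun z : ℝ => |z| ^ (p - 1)) 0 := by
      exact (Real.continuousAt_rpow_const _ _ (Or.inr (by linarith))).comp
        continuous_abs.continuousAt
    have := hcont.tendsto
    simpa [Real.zero_rpow (by linarith : p - 1 ≠ 0)] using this
  · exact continuousAt_id.mul
      ((Real.continuousAt_rpow_const _ _ (Or.inl (abs_ne_zero.mpr hy))).comp
        continuous_abs.continuousAt)

lemma hasDerivAt_abs_rpow' {p : ℝ} (hp : 1 < p) {f : ℝ → ℝ} {f' x : ℝ}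
    (hf : HasDerivAt f f' x) :
    HasDerivAt (fun t => |f t| ^ p) (p * (f x * |f x| ^ (p - 2)) * f') x := by
  rcases eq_or_ne (f x) 0 with h0 | h0
  · have hz : p * (f x * |f x| ^ (p - 2)) * f' = 0 := by rw [h0]; ring
    rw [hz, hasDerivAt_iff_tendsto_slope]
    have hbound : ∀ᶠ t in 𝓝[≠] x, ‖slope (fun t => |f t| ^ p) x t‖ ≤
        (|f'| + 1) ^ p * |t - x| ^ (p - 1) := by
      have h1 : ∀ᶠ t in 𝓝 x, ‖f t - f x - (t - x) • f'‖ ≤ 1 * ‖t - x‖ :=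
        (hasDerivAt_iff_isLittleO.mp hf).bound one_pos
      filter_upwards [nhdsWithin_le_nhds h1, self_mem_nhdsWithin] with t h1t htx
      have htx' : t - x ≠ 0 := sub_ne_zero.mpr htx
      have hft : |f t| ≤ (|f'| + 1) * |t - x| := by
        have := h1t
        simp only [smul_eq_mul, Real.norm_eq_abs, one_mul] at this
        have h2 : |f t| ≤ |f t - f x - (t - x) * f'| + |(t - x) * f'| := by
          rw [h0] at *
          calc |f t| = |(f t - 0 - (t - x) * f') + (t - x) * f'| := by ring_nf
            _ ≤ _ := abs_add_le _ _
        rw [abs_mul] at h2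
        nlinarith [abs_nonneg (t - x), abs_nonneg f']
      have hsl : slope (fun t => |f t| ^ p) x t = |f t| ^ p / (t - x) := by
        simp [slope_def_field, h0, Real.zero_rpow (by linarith : p ≠ 0)]
      rw [hsl, norm_div, Real.norm_eq_abs, Real.norm_eq_abs,
        abs_of_nonneg (Real.rpow_nonneg (abs_nonneg _) p)]
      have hfp : |f t| ^ p ≤ ((|f'| + 1) * |t - x|) ^ p :=
        Real.rpow_le_rpow (abs_nonneg _) hft (by linarith)
      rw [Real.mul_rpow (by positivity) (abs_nonneg _)] at hfp
      rw [div_le_iff₀ (abs_pos.mpr htx')]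
      calc |f t| ^ p ≤ (|f'| + 1) ^ p * |t - x| ^ p := hfp
        _ = (|f'| + 1) ^ p * |t - x| ^ (p - 1) * |t - x| := by
            rw [mul_assoc, ← Real.rpow_add_one (abs_ne_zero.mpr htx')]
            ring_nf
    apply squeeze_zero_norm' hbound
    have hc : ContinuousAt (fun t : ℝ => (|f'| + 1) ^ p * |t - x| ^ (p - 1)) x := by
      apply ContinuousAt.mul continuousAt_const
      exact (Real.continuousAt_rpow_const _ _ (Or.inr (by linarith))).comp
        ((continuous_abs.continuousAt).comp ((continuous_id.sub continuous_const).continuousAt))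
    have h6 : Tendsto (fun t : ℝ => (|f'| + 1) ^ p * |t - x| ^ (p - 1)) (𝓝[≠] x)
        (𝓝 ((|f'| + 1) ^ p * |x - x| ^ (p - 1))) :=
      hc.tendsto.mono_left (nhdsWithin_le_nhds (s := {x}ᶜ))
    simpa [Real.zero_rpow (by linarith : p - 1 ≠ 0)] using h6
  · have h2 : HasDerivAt (fun t => (f t) ^ 2) (2 * f x ^ 1 * f') x := hf.pow 2
    have h3 := h2.rpow_const (p := p / 2) (Or.inl (pow_ne_zero 2 h0))
    have habs : ∀ z : ℝ, ((z : ℝ) ^ 2) ^ (p / 2) = |z| ^ p := by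
      intro z
      rw [← sq_abs, ← Real.rpow_natCast |z| 2, ← Real.rpow_mul (abs_nonneg z)]
      norm_num
      congr 1
      ring
    have hfun : (fun t => ((f t) ^ 2) ^ (p / 2)) = fun t => |f t| ^ p := by
      funext t; exact habs (f t)
    rw [hfun] at h3
    convert h3 using 1
    have h4 : ((f x) ^ 2) ^ (p / 2 - 1) = |f x| ^ (p - 2) := by
      rw [← sq_abs, ← Real.rpow_natCast |f x| 2, ← Real.rpow_mul (abs_nonneg _)]
      norm_num; ring_nf
    rw [h4]
    have h5 : f x * |f x| ^ (p - 2) = |f x| ^ (p - 2) * f x := mul_comm _ _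
    ring

lemma young_pow {p : ℝ} (hp : 1 < p) {a b : ℝ} (ha : 0 ≤ a) (hb : 0 ≤ b) :
    p * a ^ (p - 1) * b ≤ (p - 1) * a ^ p + b ^ p := by
  have hp0 : (0:ℝ) < p := by linarith
  have key := Real.geom_mean_le_arith_mean2_weighted
    (w₁ := (p - 1)/p) (w₂ := 1/p) (p₁ := a ^ p) (p₂ := b ^ p)
    (div_nonneg (by linarith) (by linarith)) (by positivity)
    (Real.rpow_nonneg ha p) (Real.rpow_nonneg hb p)
    (by field_simp; ring)
  have h1 : (a ^ p) ^ ((p - 1)/p) = a ^ (p - 1) := by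
    rw [← Real.rpow_mul ha]
    congr 1
    field_simp
  have h2 : (b ^ p) ^ ((1:ℝ)/p) = b := by
    rw [← Real.rpow_mul hb]
    field_simp; simp
  rw [h1, h2] at key
  have := mul_le_mul_of_nonneg_left key hp0.le
  calc p * a ^ (p - 1) * b = p * (a ^ (p - 1) * b) := by ring
    _ ≤ p * ((p - 1)/p * a ^ p + 1/p * b ^ p) := this
    _ = (p - 1) * a ^ p + b ^ p := by field_simp

lemma rpow_sub_two_le {p x : ℝ} (hp : 1 < p) (hx1 : 1 ≤ x) (hx2 : x ≤ 2) :
    x ^ (p - 2) ≤ 2 ^ p := by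
  rcases le_or_gt 2 p with h | h
  · calc x ^ (p - 2) ≤ 2 ^ (p - 2) :=
        Real.rpow_le_rpow (by linarith) hx2 (by linarith)
      _ ≤ 2 ^ p := Real.rpow_le_rpow_of_exponent_le one_le_two (by linarith)
  · calc x ^ (p - 2) ≤ 1 := Real.rpow_le_one_of_one_le_of_nonpos hx1 (by linarith)
      _ ≤ 2 ^ p := by
        calc (1:ℝ) = 2 ^ (0:ℝ) := by rw [Real.rpow_zero]
          _ ≤ 2 ^ p := Real.rpow_le_rpow_of_exponent_le one_le_two hp0.le
  where hp0 : (0:ℝ) < p := by linarith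

lemma half_le_rpow_sub_two {p x : ℝ} (hp : 1 < p) (hx1 : 1 ≤ x) (hx2 : x ≤ 2) :
    1/2 ≤ x ^ (p - 2) := by
  rcases le_or_gt 2 p with h | h
  · have : (1:ℝ) ^ (p - 2) ≤ x ^ (p - 2) :=
      Real.rpow_le_rpow zero_le_one hx1 (by linarith)
    rw [Real.one_rpow] at this
    linarith
  · have h1 : (2:ℝ) ^ (p - 2) ≤ x ^ (p - 2) :=
      Real.rpow_le_rpow_of_nonpos (by linarith) hx2 (by linarith)
    have h2 : (2:ℝ) ^ (-1:ℝ) ≤ 2 ^ (p - 2) :=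
      Real.rpow_le_rpow_of_exponent_le one_le_two (by linarith)
    rw [Real.rpow_neg_one] at h2
    norm_num at h2
    linarith

lemma E_bound {p δ : ℝ} (hp : 1 < p) (h0 : 0 ≤ δ) (h1 : δ ≤ 1) :
    (p - 1) * (1 + δ) ^ p - p * (1 + δ) ^ (p - 1) + 1 ≤ p * (p - 1) * 2 ^ p * δ ^ 2 := by
  set E : ℝ → ℝ := fun x => (p - 1) * x ^ p - p * x ^ (p - 1) + 1 with hE
  set E' : ℝ → ℝ := fun x => (p - 1) * (p * x ^ (p - 1)) - p * ((p - 1) * x ^ (p - 1 - 1)) with hE'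
  have h2p' : (0:ℝ) ≤ 2 ^ p := Real.rpow_nonneg (by norm_num) p
  have hC : (0:ℝ) ≤ p * (p - 1) * 2 ^ p * δ :=
    mul_nonneg (mul_nonneg (mul_nonneg (by linarith) (by linarith)) h2p') h0
  have hderiv : ∀ x ∈ Icc (1:ℝ) (1 + δ), HasDerivWithinAt E (E' x) (Icc (1:ℝ) (1 + δ)) x := by
    intro x hx
    have hx0 : x ≠ 0 := by have := hx.1; intro h; rw [h] at this; linarith
    exact ((((Real.hasDerivAt_rpow_const (p := p) (Or.inl hx0)).const_mul (p - 1)).sub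
      ((Real.hasDerivAt_rpow_const (p := p - 1) (Or.inl hx0)).const_mul p)).add_const
      1).hasDerivWithinAt
  have hbound : ∀ x ∈ Icc (1:ℝ) (1 + δ), ‖E' x‖ ≤ p * (p - 1) * 2 ^ p * δ := by
    intro x hx
    have hx1 : 1 ≤ x := hx.1
    have hx2 : x ≤ 2 := by have := hx.2; linarith
    have hx0 : x ≠ 0 := by linarith
    have hxp2 : (0:ℝ) ≤ x ^ (p - 2) := Real.rpow_nonneg (by linarith) _
    have hx' : x ^ (p - 1) = x ^ (p - 2) * x := by
      rw [← Real.rpow_add_one hx0 (p - 2)]; ring_nf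
    have hfact : E' x = p * (p - 1) * x ^ (p - 2) * (x - 1) := by
      show (p - 1) * (p * x ^ (p - 1)) - p * ((p - 1) * x ^ (p - 1 - 1)) = _
      rw [show p - 1 - 1 = p - 2 by ring, hx']
      ring
    have hnn : (0:ℝ) ≤ p * (p - 1) * x ^ (p - 2) * (x - 1) :=
      mul_nonneg (mul_nonneg (mul_nonneg (by linarith) (by linarith)) hxp2) (by linarith)
    rw [hfact, Real.norm_eq_abs, abs_of_nonneg hnn]
    have hle : x ^ (p - 2) ≤ 2 ^ p := rpow_sub_two_le hp hx1 hx2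
    have hx1' : x - 1 ≤ δ := by have := hx.2; linarith
    have h2p : (0:ℝ) < 2 ^ p := Real.rpow_pos_of_pos (by norm_num) p
    have hA : x ^ (p - 2) * (x - 1) ≤ 2 ^ p * δ :=
      mul_le_mul hle hx1' (by linarith) h2p.le
    calc p * (p - 1) * x ^ (p - 2) * (x - 1) = p * (p - 1) * (x ^ (p - 2) * (x - 1)) := by ring
      _ ≤ p * (p - 1) * (2 ^ p * δ) :=
          mul_le_mul_of_nonneg_left hA (mul_nonneg (by linarith) (by linarith))
      _ = p * (p - 1) * 2 ^ p * δ := by ring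
  have := Convex.norm_image_sub_le_of_norm_hasDerivWithin_le hderiv hbound
    (convex_Icc _ _) (Set.left_mem_Icc.mpr (by linarith)) (Set.right_mem_Icc.mpr (by linarith))
  have hE1 : E 1 = 0 := by simp [hE]
  rw [hE1, sub_zero, Real.norm_eq_abs, Real.norm_eq_abs] at this
  have h3 : E (1 + δ) ≤ |E (1 + δ)| := le_abs_self _
  have h4 : |1 + δ - 1| = δ := by rw [show (1 + δ - 1 : ℝ) = δ by ring, abs_of_nonneg h0]
  rw [h4] at this
  calc (p - 1) * (1 + δ) ^ p - p * (1 + δ) ^ (p - 1) + 1 = E (1 + δ) := rfl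
    _ ≤ p * (p - 1) * 2 ^ p * δ * δ := by linarith
    _ = p * (p - 1) * 2 ^ p * δ ^ 2 := by ring

lemma key_scalar {p β X ε : ℝ} (hp : 1 < p) (hβ : 0 < β) (hX : 1 ≤ X)
    (hε0 : 0 < ε) (hε1 : ε ≤ 1)
    (hεK : β * (p * (p - 1) * 2 ^ p) * ε ≤ (p - 1) / 4) :
    β ^ p + (p - 1) * β ^ p * (1 + ε / X) ^ p + (β ^ (p - 1) * (p - 1) * ε / 4) / X ^ 2
      ≤ β ^ (p - 1) * ((p - 1) * (1 + ε / X) ^ (p - 2) * ε / X ^ 2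
          + β * p * (1 + ε / X) ^ (p - 1)) := by
  have hX0 : (0:ℝ) < X := by linarith
  have hX2 : (0:ℝ) < X ^ 2 := by positivity
  set δ := ε / X with hδdef
  have hδ0 : 0 < δ := div_pos hε0 hX0
  have hδ1 : δ ≤ 1 := by
    rw [hδdef, div_le_one hX0]; linarith
  have hh1 : (1:ℝ) ≤ 1 + δ := by linarith
  have hh2 : 1 + δ ≤ 2 := by linarith
  have hE := E_bound hp hδ0.le hδ1
  have hhalf := half_le_rpow_sub_two hp hh1 hh2
  have hβp : β ^ p = β ^ (p - 1) * β := by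
    rw [← Real.rpow_add_one hβ.ne' (p - 1)]
    congr 1; ring
  set K := p * (p - 1) * 2 ^ p with hK
  have e1 : β * ((p - 1) * (1 + δ) ^ p - p * (1 + δ) ^ (p - 1) + 1) ≤ β * (K * δ ^ 2) :=
    mul_le_mul_of_nonneg_left hE hβ.le
  have e2 : β * (K * δ ^ 2) ≤ (p - 1) * ε / 4 / X ^ 2 := by
    have hδ2 : δ ^ 2 = ε ^ 2 / X ^ 2 := div_pow ε X 2
    have hnum : β * K * ε * ε ≤ (p - 1) * ε / 4 := by
      nlinarith [mul_le_mul_of_nonneg_right hεK hε0.le]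
    calc β * (K * δ ^ 2) = (β * K * ε * ε) / X ^ 2 := by rw [hδ2]; ring
      _ ≤ ((p - 1) * ε / 4) / X ^ 2 := (div_le_div_iff_of_pos_right hX2).mpr hnum
  have e3 : (p - 1) * ε / 4 / X ^ 2 + (p - 1) * ε / 4 / X ^ 2
      ≤ (p - 1) * (1 + δ) ^ (p - 2) * ε / X ^ 2 := by
    rw [← add_div]
    apply (div_le_div_iff_of_pos_right hX2).mpr
    nlinarith [mul_le_mul_of_nonneg_left hhalf
      (mul_nonneg (by linarith : (0:ℝ) ≤ p - 1) hε0.le)]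
  have key0 : 0 ≤ (p - 1) * (1 + δ) ^ (p - 2) * ε / X ^ 2 - (p - 1) * ε / 4 / X ^ 2
      - β * ((p - 1) * (1 + δ) ^ p - p * (1 + δ) ^ (p - 1) + 1) := by
    linarith [e1.trans e2, e3]
  have hB : (0:ℝ) ≤ β ^ (p - 1) := Real.rpow_nonneg hβ.le _
  have hprod := mul_nonneg hB key0
  have hfinal : β ^ (p - 1) * ((p - 1) * (1 + δ) ^ (p - 2) * ε / X ^ 2
        + β * p * (1 + δ) ^ (p - 1))
      - (β ^ (p - 1) * β + (p - 1) * (β ^ (p - 1) * β) * (1 + δ) ^ p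
        + (β ^ (p - 1) * (p - 1) * ε / 4) / X ^ 2)
      = β ^ (p - 1) * ((p - 1) * (1 + δ) ^ (p - 2) * ε / X ^ 2 - (p - 1) * ε / 4 / X ^ 2
        - β * ((p - 1) * (1 + δ) ^ p - p * (1 + δ) ^ (p - 1) + 1)) := by
    ring
  rw [hβp]
  linarith [hfinal, hprod]

set_option maxHeartbeats 1000000 in
lemma pointwise_key {p β ε X t y d αp : ℝ} (hp : 1 < p) (hβ : 0 < β)
    (hX : 1 ≤ X) (hε0 : 0 < ε) (hε1 : ε ≤ 1)
    (hεK : β * (p * (p - 1) * 2 ^ p) * ε ≤ (p - 1) / 4)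
    (ht0 : 0 < t) (hαp : αp = β * p - 1 + p) :
    β ^ (p - 1) * (p - 1) * ε / 4 * ((|y| / t) ^ p * t ^ αp / X ^ 2)
      ≤ (|d| ^ p - β ^ p * (|y| / t) ^ p) * t ^ αp
        + (β ^ (p - 1) * ((p - 1) * (1 + ε / X) ^ (p - 2) * ε / X ^ 2
              + β * p * (1 + ε / X) ^ (p - 1)) * t ^ (β * p - 1) * |y| ^ p
           + β ^ (p - 1) * ((1 + ε / X) ^ (p - 1) * t ^ (β * p))
              * (p * (y * |y| ^ (p - 2)) * d)) := by
  have hp0 : (0:ℝ) < p := by linarith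
  have hX0 : (0:ℝ) < X := by linarith
  have htp : (0:ℝ) < t ^ p := Real.rpow_pos_of_pos ht0 p
  have htap : (0:ℝ) < t ^ αp := Real.rpow_pos_of_pos ht0 αp
  have htb : (0:ℝ) < t ^ (β * p - 1) := Real.rpow_pos_of_pos ht0 _
  have htbp : (0:ℝ) < t ^ (β * p) := Real.rpow_pos_of_pos ht0 _
  set h : ℝ := 1 + ε / X with hhdef
  have hh1 : (1:ℝ) ≤ h := by
    rw [hhdef]; have : 0 ≤ ε / X := le_of_lt (div_pos hε0 hX0); linarith
  have hhpos : (0:ℝ) < h := by linarith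
  -- power conversions
  have hPab : t ^ αp = t ^ (β * p - 1) * t ^ p := by
    rw [hαp, show β * p - 1 + p = (β * p - 1) + p from rfl, Real.rpow_add ht0]
  have hPab2 : t ^ αp = t ^ (β * p) * t ^ (p - 1) := by
    rw [hαp, show β * p - 1 + p = β * p + (p - 1) by ring, Real.rpow_add ht0]
  have hfrac : |y| ^ p / t ^ p * t ^ αp = |y| ^ p * t ^ (β * p - 1) := by
    rw [hPab]; field_simp
  have hdivy : (|y| / t) ^ p = |y| ^ p / t ^ p := Real.div_rpow (abs_nonneg y) ht0.le p
  set a : ℝ := β * h * |y| / t with hadef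
  have ha0 : 0 ≤ a := by
    rw [hadef]
    exact div_nonneg (mul_nonneg (mul_nonneg hβ.le hhpos.le) (abs_nonneg y)) ht0.le
  have hap : a ^ p * t ^ αp = β ^ p * h ^ p * (|y| ^ p * t ^ (β * p - 1)) := by
    have h1 : a ^ p = β ^ p * h ^ p * |y| ^ p / t ^ p := by
      rw [hadef, Real.div_rpow (mul_nonneg (mul_nonneg hβ.le hhpos.le) (abs_nonneg y)) ht0.le,
        Real.mul_rpow (mul_nonneg hβ.le hhpos.le) (abs_nonneg y),
        Real.mul_rpow hβ.le hhpos.le]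
    rw [h1, hPab]
    field_simp
  have hap1 : a ^ (p - 1) * t ^ αp = β ^ (p - 1) * h ^ (p - 1) * |y| ^ (p - 1) * t ^ (β * p) := by
    have h1 : a ^ (p - 1) = β ^ (p - 1) * h ^ (p - 1) * |y| ^ (p - 1) / t ^ (p - 1) := by
      rw [hadef, Real.div_rpow (mul_nonneg (mul_nonneg hβ.le hhpos.le) (abs_nonneg y)) ht0.le,
        Real.mul_rpow (mul_nonneg hβ.le hhpos.le) (abs_nonneg y),
        Real.mul_rpow hβ.le hhpos.le]
    have htp1 : (0:ℝ) < t ^ (p - 1) := Real.rpow_pos_of_pos ht0 _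
    rw [h1, hPab2]
    field_simp
  -- the sign/abs step
  have habs : |y * |y| ^ (p - 2)| = |y| ^ (p - 1) := abs_mul_abs_rpow hp y
  have s1 : -(|y| ^ (p - 1) * |d|) ≤ y * |y| ^ (p - 2) * d := by
    have h1 : -|y * |y| ^ (p - 2) * d| ≤ y * |y| ^ (p - 2) * d := neg_abs_le _
    rwa [abs_mul, habs] at h1
  set W : ℝ := β ^ (p - 1) * (h ^ (p - 1) * t ^ (β * p)) with hWdef
  have hWnn : 0 ≤ W := by
    rw [hWdef]
    exact mul_nonneg (Real.rpow_nonneg hβ.le _)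
      (mul_nonneg (Real.rpow_nonneg hhpos.le _) htbp.le)
  have s2 := mul_le_mul_of_nonneg_left s1 hp0.le
  have s3 := mul_le_mul_of_nonneg_left s2 hWnn
  -- Young
  have hY := young_pow hp ha0 (abs_nonneg d)
  have sYa : p * a ^ (p - 1) * |d| * t ^ αp
      ≤ (p - 1) * (β ^ p * h ^ p * (|y| ^ p * t ^ (β * p - 1))) + |d| ^ p * t ^ αp := by
    calc p * a ^ (p - 1) * |d| * t ^ αp ≤ ((p - 1) * a ^ p + |d| ^ p) * t ^ αp :=
          mul_le_mul_of_nonneg_right hY htap.le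
      _ = (p - 1) * (a ^ p * t ^ αp) + |d| ^ p * t ^ αp := by ring
      _ = _ := by rw [hap]
  have sEq : W * (p * (|y| ^ (p - 1) * |d|)) = p * a ^ (p - 1) * |d| * t ^ αp := by
    have : p * a ^ (p - 1) * |d| * t ^ αp = p * |d| * (a ^ (p - 1) * t ^ αp) := by ring
    rw [this, hap1, hWdef]
    ring
  -- key scalar, multiplied up
  have hKS := key_scalar hp hβ hX hε0 hε1 hεK
  rw [← hhdef] at hKS
  have ing3 := mul_le_mul_of_nonneg_right hKS htb.le
  have ing3' := mul_le_mul_of_nonneg_right ing3 (Real.rpow_nonneg (abs_nonneg y) p)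
  -- final assembly
  rw [hdivy]
  have e1 : (|d| ^ p - β ^ p * (|y| ^ p / t ^ p)) * t ^ αp
      = |d| ^ p * t ^ αp - β ^ p * (|y| ^ p * t ^ (β * p - 1)) := by
    rw [sub_mul, mul_assoc, hfrac]
  rw [e1]
  rw [show |y| ^ p / t ^ p * t ^ αp / X ^ 2
      = |y| ^ p * t ^ (β * p - 1) / X ^ 2 by rw [hfrac]]
  have comb1 : -(W * (p * (|y| ^ (p - 1) * |d|))) ≤ W * (p * (y * |y| ^ (p - 2)) * d) := by
    linarith [s3]
  have comb2 : -((p - 1) * (β ^ p * h ^ p * (|y| ^ p * t ^ (β * p - 1))) + |d| ^ p * t ^ αp)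
      ≤ W * (p * (y * |y| ^ (p - 2)) * d) := by
    linarith [comb1, sEq, sYa]
  ring_nf at comb2 ing3' ⊢
  linarith [comb2, ing3']

/-- Critical case `α > 1 - 1/p` with logarithmic remainder. -/
theorem hardy_supercritical_remainder (p α R : ℝ) (hp : 1 < p) (hα : 1 - 1/p < α)
    (hR : Real.exp 1 < R) :
    ∃ C₅ > (0:ℝ), ∃ L > (0:ℝ), ∀ u : ℝ → ℝ, ContDiff ℝ (⊤ : ℕ∞) u →
      (∃ a > (0:ℝ), ∀ t < a, u t = 0) →
      (∫ t in Ioc (0:ℝ) 1,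
          (|deriv u t| ^ p - |1 - 1/p - α| ^ p * (|u t| / t) ^ p) * t ^ (α * p))
        + L * |u 1| ^ p ≥
      C₅ * ∫ t in Ioc (0:ℝ) 1,
          (|u t| / t) ^ p * t ^ (α * p) * (Real.log (R / t)) ^ (-(2:ℝ)) := by
  have hp0 : (0:ℝ) < p := by linarith
  set β : ℝ := α - 1 + 1/p with hβdef
  have hβ : 0 < β := by
    have h1 : 0 < 1/p := by positivity
    rw [hβdef]; linarith
  have hαp : α * p = β * p - 1 + p := by
    rw [hβdef]; field_simp; ring
  have habs : |1 - 1/p - α| = β := by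
    rw [show 1 - 1/p - α = -β by rw [hβdef]; ring, abs_neg, abs_of_pos hβ]
  have hR0 : (0:ℝ) < R := lt_trans (Real.exp_pos 1) hR
  set lam : ℝ := Real.log R with hlamdef
  have hlam : 1 < lam := by
    rw [hlamdef]
    calc (1:ℝ) = Real.log (Real.exp 1) := (Real.log_exp 1).symm
      _ < Real.log R := Real.log_lt_log (Real.exp_pos 1) hR
  have h2p : (0:ℝ) < (2:ℝ) ^ p := Real.rpow_pos_of_pos (by norm_num) p
  have hKpos : (0:ℝ) < p * (p - 1) * 2 ^ p := mul_pos (mul_pos hp0 (by linarith)) h2p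
  set ε : ℝ := min 1 ((p - 1) / (4 * β * (p * (p - 1) * 2 ^ p))) with hεdef
  have hε0 : 0 < ε := lt_min one_pos
    (div_pos (by linarith) (mul_pos (mul_pos (by norm_num) hβ) hKpos))
  have hε1 : ε ≤ 1 := min_le_left _ _
  have hεK : β * (p * (p - 1) * 2 ^ p) * ε ≤ (p - 1) / 4 := by
    have h1 : ε ≤ (p - 1) / (4 * β * (p * (p - 1) * 2 ^ p)) := min_le_right _ _
    have h2 : β * (p * (p - 1) * 2 ^ p) * ε
        ≤ β * (p * (p - 1) * 2 ^ p) * ((p - 1) / (4 * β * (p * (p - 1) * 2 ^ p))) :=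
      mul_le_mul_of_nonneg_left h1 (le_of_lt (mul_pos hβ hKpos))
    have h3 : β * (p * (p - 1) * 2 ^ p) * ((p - 1) / (4 * β * (p * (p - 1) * 2 ^ p)))
        = (p - 1) / 4 := by
      rw [eq_div_iff (by norm_num : (4:ℝ) ≠ 0)]
      field_simp
    linarith
  refine ⟨β ^ (p - 1) * (p - 1) * ε / 4, ?_, β ^ (p - 1) * (1 + ε / lam) ^ (p - 1), ?_, ?_⟩
  · exact div_pos (mul_pos (mul_pos (Real.rpow_pos_of_pos hβ _) (by linarith)) hε0)
      (by norm_num)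
  · refine mul_pos (Real.rpow_pos_of_pos hβ _) (Real.rpow_pos_of_pos ?_ _)
    have : 0 < ε / lam := div_pos hε0 (by linarith)
    linarith
  intro u hu hsupp
  obtain ⟨a, ha0, hua⟩ := hsupp
  have hud : Differentiable ℝ u := hu.differentiable (by simp)
  have huc : Continuous u := hud.continuous
  have hudc : Continuous (deriv u) := hu.continuous_deriv (by simp)
  set c : ℝ := min a 1 / 2 with hcdef
  have hc0 : 0 < c := half_pos (lt_min ha0 one_pos)
  have hc1 : c ≤ 1 := by
    rw [hcdef]; have := min_le_right a 1; linarith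
  have hca : c < a := by
    rw [hcdef]
    have h1 := half_lt_self (lt_min ha0 one_pos)
    have h2 := min_le_left a 1
    linarith
  have huc0 : ∀ t, t ≤ c → u t = 0 := fun t ht => hua t (lt_of_le_of_lt ht hca)
  have hderiv0 : ∀ t, t ≤ c → deriv u t = 0 := by
    intro t ht
    have hev : u =ᶠ[nhds t] (fun _ => (0:ℝ)) := by
      filter_upwards [Iio_mem_nhds (lt_of_le_of_lt ht hca)] with s hs using hua s hs
    rw [hev.deriv_eq]
    exact deriv_const t 0
  -- the main functions
  set X : ℝ → ℝ := fun t => lam - Real.log t with hXdef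
  set G₁ : ℝ → ℝ := fun t =>
    (|deriv u t| ^ p - |1 - 1/p - α| ^ p * (|u t| / t) ^ p) * t ^ (α * p) with hG₁def
  set G₂ : ℝ → ℝ := fun t =>
    (|u t| / t) ^ p * t ^ (α * p) * (Real.log (R / t)) ^ (-(2:ℝ)) with hG₂def
  set W : ℝ → ℝ := fun t => β ^ (p - 1) * ((1 + ε / X t) ^ (p - 1) * t ^ (β * p)) with hWdef
  set Wd : ℝ → ℝ := fun t =>
    β ^ (p - 1) * ((p - 1) * (1 + ε / X t) ^ (p - 2) * ε / (X t) ^ 2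
      + β * p * (1 + ε / X t) ^ (p - 1)) * t ^ (β * p - 1) with hWddef
  set A : ℝ → ℝ := fun t => |u t| ^ p with hAdef
  set Fd : ℝ → ℝ := fun t =>
    Wd t * A t + W t * (p * (u t * |u t| ^ (p - 2)) * deriv u t) with hFddef
  set F : ℝ → ℝ := fun t => W t * A t with hFdef
  -- basic facts about X
  have hXge : ∀ t : ℝ, 0 < t → t ≤ 1 → lam ≤ X t := by
    intro t ht0 ht1
    have := Real.log_nonpos ht0.le ht1
    simp only [hXdef]; linarith
  have hlogeq : ∀ t : ℝ, 0 < t → Real.log (R / t) = X t := by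
    intro t ht0
    rw [Real.log_div (ne_of_gt hR0) (ne_of_gt ht0), ← hlamdef]
  -- zero on (0, c]
  have hG₁0 : ∀ t : ℝ, 0 < t → t ≤ c → G₁ t = 0 := by
    intro t ht0 htc
    simp only [hG₁def]
    rw [huc0 t htc, hderiv0 t htc]
    simp [Real.zero_rpow (ne_of_gt hp0)]
  have hG₂0 : ∀ t : ℝ, 0 < t → t ≤ c → G₂ t = 0 := by
    intro t ht0 htc
    simp only [hG₂def]
    rw [huc0 t htc]
    simp [Real.zero_rpow (ne_of_gt hp0)]
  -- reduction of the domain of integration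
  have hsub : Ioc c 1 ⊆ Ioc (0:ℝ) 1 := Ioc_subset_Ioc_left hc0.le
  have hred : ∀ G : ℝ → ℝ, (∀ t : ℝ, 0 < t → t ≤ c → G t = 0) →
      ∫ t in Ioc (0:ℝ) 1, G t = ∫ t in Ioc c 1, G t := by
    intro G hG
    have h1 : ∫ t in Ioc (0:ℝ) 1, G t = ∫ t in Ioc (0:ℝ) 1, (Ioc c 1).indicator G t := by
      apply MeasureTheory.setIntegral_congr_fun measurableSet_Ioc
      intro t ht
      rcases le_or_gt t c with h2 | h2
      · rw [Set.indicator_of_notMem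
          (fun hmem => absurd (Set.mem_Ioc.mp hmem).1 (not_lt.mpr h2))]
        exact hG t ht.1 h2
      · rw [Set.indicator_of_mem (Set.mem_Ioc.mpr ⟨h2, ht.2⟩)]
    rw [h1, MeasureTheory.setIntegral_indicator measurableSet_Ioc,
      Set.inter_eq_right.mpr hsub]
  -- derivative of F
  have hWderiv : ∀ t ∈ Icc c 1, HasDerivAt W (Wd t) t := by
    intro t htmem
    obtain ⟨htc, ht1⟩ := htmem
    have ht0 : 0 < t := lt_of_lt_of_le hc0 htc
    have hXget : lam ≤ X t := hXge t ht0 ht1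
    have hXpos : 0 < X t := by linarith
    have hXne : X t ≠ 0 := ne_of_gt hXpos
    have hhpos : 0 < 1 + ε / X t := by
      have : 0 < ε / X t := div_pos hε0 hXpos
      linarith
    have d1 : HasDerivAt X (-t⁻¹) t := by
      rw [hXdef]
      exact (Real.hasDerivAt_log (ne_of_gt ht0)).const_sub lam
    have d2 : HasDerivAt (fun s => (X s)⁻¹) (-(-t⁻¹) / X t ^ 2) t := d1.inv hXne
    have d3 : HasDerivAt (fun s => 1 + ε / X s) (ε * (-(-t⁻¹) / X t ^ 2)) t := by
      have := (d2.const_mul ε).const_add 1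
      simpa [div_eq_mul_inv] using this
    have d4 : HasDerivAt (fun s => (1 + ε / X s) ^ (p - 1))
        ((ε * (-(-t⁻¹) / X t ^ 2)) * (p - 1) * (1 + ε / X t) ^ (p - 1 - 1)) t :=
      d3.rpow_const (Or.inl (ne_of_gt hhpos))
    have d5 : HasDerivAt (fun s : ℝ => s ^ (β * p)) (β * p * t ^ (β * p - 1)) t :=
      Real.hasDerivAt_rpow_const (Or.inl (ne_of_gt ht0))
    have d7 := (d4.mul d5).const_mul (β ^ (p - 1))
    have hsplit : t ^ (β * p - 1) * t = t ^ (β * p) := by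
      rw [Real.rpow_sub ht0, Real.rpow_one, div_mul_cancel₀ _ (ne_of_gt ht0)]
    simp only [hWdef, hWddef]
    refine d7.congr_deriv ?_
    rw [show p - 1 - 1 = p - 2 by ring, neg_neg, ← hsplit]
    field_simp
  have hFderiv : ∀ t ∈ uIcc c 1, HasDerivAt F (Fd t) t := by
    rw [uIcc_of_le hc1]
    intro t ht
    have h1 := hWderiv t ht
    have h2 : HasDerivAt A (p * (u t * |u t| ^ (p - 2)) * deriv u t) t := by
      rw [hAdef]
      exact hasDerivAt_abs_rpow' hp (hud t).hasDerivAt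
    simp only [hFdef, hFddef]
    exact h1.mul h2
  -- continuity facts
  have hcontW : ∀ t ∈ Icc c 1, ContinuousAt W t := by
    intro t htmem
    obtain ⟨htc, ht1⟩ := htmem
    have ht0 : 0 < t := lt_of_lt_of_le hc0 htc
    have hXget : lam ≤ X t := hXge t ht0 ht1
    have hXpos : 0 < X t := by linarith
    have hXne : X t ≠ 0 := ne_of_gt hXpos
    have hhpos : 0 < 1 + ε / X t := by
      have : 0 < ε / X t := div_pos hε0 hXpos
      linarith
    have cX : ContinuousAt X t := by
      rw [hXdef]
      exact continuousAt_const.sub (Real.continuousAt_log (ne_of_gt ht0))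
    have ch : ContinuousAt (fun s => 1 + ε / X s) t :=
      continuousAt_const.add (continuousAt_const.div cX hXne)
    have chp1 : ContinuousAt (fun s => (1 + ε / X s) ^ (p - 1)) t :=
      ch.rpow_const (Or.inl (ne_of_gt hhpos))
    have ct1 : ContinuousAt (fun s : ℝ => s ^ (β * p)) t :=
      Real.continuousAt_rpow_const _ _ (Or.inl (ne_of_gt ht0))
    rw [hWdef]
    exact continuousAt_const.mul (chp1.mul ct1)
  have hcontWd : ∀ t ∈ Icc c 1, ContinuousAt Wd t := by
    intro t htmem
    obtain ⟨htc, ht1⟩ := htmem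
    have ht0 : 0 < t := lt_of_lt_of_le hc0 htc
    have hXget : lam ≤ X t := hXge t ht0 ht1
    have hXpos : 0 < X t := by linarith
    have hXne : X t ≠ 0 := ne_of_gt hXpos
    have hhpos : 0 < 1 + ε / X t := by
      have : 0 < ε / X t := div_pos hε0 hXpos
      linarith
    have cX : ContinuousAt X t := by
      rw [hXdef]
      exact continuousAt_const.sub (Real.continuousAt_log (ne_of_gt ht0))
    have ch : ContinuousAt (fun s => 1 + ε / X s) t :=
      continuousAt_const.add (continuousAt_const.div cX hXne)
    have chp1 : ContinuousAt (fun s => (1 + ε / X s) ^ (p - 1)) t :=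
      ch.rpow_const (Or.inl (ne_of_gt hhpos))
    have chp2 : ContinuousAt (fun s => (1 + ε / X s) ^ (p - 2)) t :=
      ch.rpow_const (Or.inl (ne_of_gt hhpos))
    have ct2 : ContinuousAt (fun s : ℝ => s ^ (β * p - 1)) t :=
      Real.continuousAt_rpow_const _ _ (Or.inl (ne_of_gt ht0))
    have cX2 : ContinuousAt (fun s => (X s) ^ 2) t := cX.pow 2
    have hX2ne : (X t) ^ 2 ≠ 0 := pow_ne_zero 2 hXne
    rw [hWddef]
    exact (continuousAt_const.mul
      ((((continuousAt_const.mul chp2).mul continuousAt_const).div cX2 hX2ne).add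
        (continuousAt_const.mul chp1))).mul ct2
  have hcontA : Continuous A := by
    rw [hAdef]
    exact huc.abs.rpow_const (fun x => Or.inr hp0.le)
  have hcontΦ : Continuous (fun s => u s * |u s| ^ (p - 2)) :=
    (continuous_mul_abs_rpow hp).comp huc
  have hcontFd : ContinuousOn Fd (Icc c 1) := by
    intro t ht
    apply ContinuousAt.continuousWithinAt
    rw [hFddef]
    exact ((hcontWd t ht).mul hcontA.continuousAt).add
      ((hcontW t ht).mul ((continuousAt_const.mul hcontΦ.continuousAt).mul
        hudc.continuousAt))
  have hcontG₁ : ContinuousOn G₁ (Icc c 1) := by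
    intro t ht
    have ht0 : 0 < t := lt_of_lt_of_le hc0 ht.1
    apply ContinuousAt.continuousWithinAt
    have cD : ContinuousAt (fun s => |deriv u s| ^ p) t :=
      (hudc.abs.continuousAt).rpow_const (Or.inr hp0.le)
    have cQ : ContinuousAt (fun s => (|u s| / s) ^ p) t :=
      ((huc.abs.continuousAt).div continuousAt_id (ne_of_gt ht0)).rpow_const
        (Or.inr hp0.le)
    have cT : ContinuousAt (fun s : ℝ => s ^ (α * p)) t :=
      Real.continuousAt_rpow_const _ _ (Or.inl (ne_of_gt ht0))
    rw [hG₁def]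
    exact ((cD.sub (continuousAt_const.mul cQ)).mul cT)
  have hcontG₂ : ContinuousOn G₂ (Icc c 1) := by
    intro t ht
    have ht0 : 0 < t := lt_of_lt_of_le hc0 ht.1
    have hXget : lam ≤ X t := hXge t ht0 ht.2
    have hlogne : Real.log (R / t) ≠ 0 := by
      rw [hlogeq t ht0]
      intro h; rw [h] at hXget; linarith
    apply ContinuousAt.continuousWithinAt
    have cQ : ContinuousAt (fun s => (|u s| / s) ^ p) t :=
      ((huc.abs.continuousAt).div continuousAt_id (ne_of_gt ht0)).rpow_const
        (Or.inr hp0.le)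
    have cT : ContinuousAt (fun s : ℝ => s ^ (α * p)) t :=
      Real.continuousAt_rpow_const _ _ (Or.inl (ne_of_gt ht0))
    have cL : ContinuousAt (fun s => Real.log (R / s) ^ (-(2:ℝ))) t := by
      refine ContinuousAt.rpow_const ?_ (Or.inl hlogne)
      exact ((continuousAt_const.div continuousAt_id (ne_of_gt ht0)).log
        (ne_of_gt (div_pos hR0 ht0)))
    rw [hG₂def]
    exact (cQ.mul cT).mul cL
  -- integrability
  have hIG₁ : IntegrableOn G₁ (Ioc c 1) volume :=
    (hcontG₁.integrableOn_Icc).mono_set Ioc_subset_Icc_self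
  have hIG₂ : IntegrableOn G₂ (Ioc c 1) volume :=
    (hcontG₂.integrableOn_Icc).mono_set Ioc_subset_Icc_self
  have hIFd : IntegrableOn Fd (Ioc c 1) volume :=
    (hcontFd.integrableOn_Icc).mono_set Ioc_subset_Icc_self
  -- FTC
  have hFdint : IntervalIntegrable Fd volume c 1 := by
    apply ContinuousOn.intervalIntegrable
    rw [uIcc_of_le hc1]
    exact hcontFd
  have hFTC : ∫ t in Ioc c 1, Fd t = F 1 - F c := by
    rw [← intervalIntegral.integral_of_le hc1]
    exact intervalIntegral.integral_eq_sub_of_hasDerivAt hFderiv hFdint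
  have hFc : F c = 0 := by
    simp only [hFdef, hAdef]
    rw [huc0 c le_rfl]
    simp [Real.zero_rpow (ne_of_gt hp0)]
  have hF1 : F 1 = β ^ (p - 1) * (1 + ε / lam) ^ (p - 1) * |u 1| ^ p := by
    simp only [hFdef, hWdef, hAdef, hXdef]
    rw [Real.log_one, Real.one_rpow, sub_zero]
    ring
  -- pointwise inequality
  have hpt : ∀ t ∈ Ioc c 1, β ^ (p - 1) * (p - 1) * ε / 4 * G₂ t ≤ G₁ t + Fd t := by
    intro t htmem
    obtain ⟨htc, ht1⟩ := htmem
    have ht0 : 0 < t := lt_of_lt_of_le hc0 htc.le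
    have hXget : lam ≤ X t := hXge t ht0 ht1
    have hXpos : 0 < X t := by linarith
    have hX1 : 1 ≤ X t := by linarith
    have key := pointwise_key (y := u t) (d := deriv u t) (X := X t) (t := t)
      hp hβ hX1 hε0 hε1 hεK ht0 hαp
    simp only [hG₁def, hG₂def, hFddef, hWdef, hWddef, hAdef]
    rw [habs, hlogeq t ht0,
      Real.rpow_neg (le_of_lt hXpos),
      show (X t) ^ (2:ℝ) = (X t) ^ (2:ℕ) from by
        rw [← Real.rpow_natCast (X t) 2]; norm_num,
      ← div_eq_mul_inv]
    exact key
  -- assembling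
  have hmono : ∫ t in Ioc c 1, (β ^ (p - 1) * (p - 1) * ε / 4) * G₂ t
      ≤ ∫ t in Ioc c 1, (G₁ t + Fd t) :=
    MeasureTheory.setIntegral_mono_on (hIG₂.const_mul _) (hIG₁.add hIFd)
      measurableSet_Ioc hpt
  rw [ge_iff_le]
  calc β ^ (p - 1) * (p - 1) * ε / 4 * ∫ t in Ioc (0:ℝ) 1, G₂ t
      = β ^ (p - 1) * (p - 1) * ε / 4 * ∫ t in Ioc c 1, G₂ t := by
        rw [hred G₂ hG₂0]
    _ = ∫ t in Ioc c 1, (β ^ (p - 1) * (p - 1) * ε / 4) * G₂ t := by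
        rw [MeasureTheory.integral_const_mul]
    _ ≤ ∫ t in Ioc c 1, (G₁ t + Fd t) := hmono
    _ = (∫ t in Ioc c 1, G₁ t) + ∫ t in Ioc c 1, Fd t :=
        MeasureTheory.integral_add hIG₁ hIFd
    _ = (∫ t in Ioc (0:ℝ) 1, G₁ t) + (F 1 - F c) := by
        rw [hred G₁ hG₁0, hFTC]
    _ = (∫ t in Ioc (0:ℝ) 1, G₁ t) + β ^ (p - 1) * (1 + ε / lam) ^ (p - 1) * |u 1| ^ p := by
        rw [hFc, hF1]; ring
end

section
/- Let α > 1 - 1/p and 1 < p < ∞. For ε ∈ (0,1) define u_ε(t) = t/ε for 0 ≤ t ≤ ε and u_ε(t) = 1 for ε ≤ t ≤ 1. Then u_ε(0) = 0, u_ε(1) = 1, ∫₀¹ |u_ε'(t)|^p t^{αp} dt → 0 as ε → 0⁺, while ∫₀¹ |u_ε(t)|^p t^{(α-1)p} dt → 1/(αp − p + 1) > 0 as ε → 0⁺. -/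
/-! Splitting at `ε`, both integrals are explicit: with `q` the exponent of `t`, the first is
`ε^(q+1-p)/(q+1)` and the second `ε^(q+1)/(p+q+1) + (1 - ε^(q+1))/(q+1)`. For the exponents of
the theorem, `q + 1 - p = αp - p + 1 > 0` in the first and `q + 1 = αp - p + 1` in the second, so
the powers of `ε` vanish in the limit. -/

open MeasureTheory Real Set Filter Topology

noncomputable def ramp (ε : ℝ) : ℝ → ℝ := fun t => if t ≤ ε then t / ε else 1

lemma deriv_ramp_of_lt {ε t : ℝ} (ht : t < ε) : deriv (ramp ε) t = 1 / ε := by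
  have h : ramp ε =ᶠ[𝓝 t] fun s => s / ε := by
    filter_upwards [Iio_mem_nhds ht] with s (hs : s < ε)
    simp [ramp, hs.le]
  rw [h.deriv_eq]
  exact ((hasDerivAt_id t).div_const ε).deriv

lemma deriv_ramp_of_gt {ε t : ℝ} (ht : ε < t) : deriv (ramp ε) t = 0 := by
  have h : ramp ε =ᶠ[𝓝 t] fun _ => (1 : ℝ) := by
    filter_upwards [Ioi_mem_nhds ht] with s (hs : ε < s)
    simp [ramp, hs.not_ge]
  rw [h.deriv_eq, deriv_const]

lemma abs_deriv_ramp_rpow_mul_rpow_ae_eq {ε p q : ℝ} (hε : 0 < ε) (hp : p ≠ 0) :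
    (fun t => |deriv (ramp ε) t| ^ p * t ^ q)
      =ᵐ[volume.restrict (Ioi 0)] (Ioc 0 ε).indicator (fun t => ε ^ (-p) * t ^ q) := by
  filter_upwards [ae_restrict_of_ae (volume.ae_ne ε), ae_restrict_mem measurableSet_Ioi]
    with t hne (ht : 0 < t)
  rcases hne.lt_or_gt with hlt | hgt
  · rw [deriv_ramp_of_lt hlt, indicator_of_mem (show t ∈ Ioc 0 ε from ⟨ht, hlt.le⟩),
      abs_of_pos (by positivity), one_div, inv_rpow hε.le, ← rpow_neg hε.le]
  · rw [deriv_ramp_of_gt hgt, indicator_of_notMem (fun h => hgt.not_ge h.2), abs_zero,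
      zero_rpow hp, zero_mul]

lemma integral_abs_deriv_ramp_rpow_mul_rpow {ε p q : ℝ} (hε : ε ∈ Ioc 0 1) (hp : p ≠ 0)
    (hq : -1 < q) :
    ∫ t in Ioc (0 : ℝ) 1, |deriv (ramp ε) t| ^ p * t ^ q = ε ^ (q + 1 - p) / (q + 1) := by
  have hae := ae_restrict_of_ae_restrict_of_subset (Ioc_subset_Ioi_self : Ioc (0 : ℝ) 1 ⊆ Ioi 0)
    (abs_deriv_ramp_rpow_mul_rpow_ae_eq (q := q) hε.1 hp)
  rw [integral_congr_ae hae, setIntegral_indicator measurableSet_Ioc,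
    inter_eq_self_of_subset_right (Ioc_subset_Ioc_right hε.2),
    ← intervalIntegral.integral_of_le hε.1.le, intervalIntegral.integral_const_mul,
    integral_rpow (Or.inl hq), zero_rpow (by linarith), sub_zero, rpow_sub hε.1, rpow_neg hε.1.le]
  ring

lemma abs_ramp_rpow_mul_rpow_of_mem_Ioc_left {ε p q t : ℝ} (hε : 0 < ε) (ht : t ∈ Ioc 0 ε) :
    |ramp ε t| ^ p * t ^ q = ε ^ (-p) * t ^ (p + q) := by
  rw [ramp, if_pos ht.2, abs_of_pos (div_pos ht.1 hε), div_rpow ht.1.le hε.le,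
    rpow_add ht.1, rpow_neg hε.le]
  ring

lemma abs_ramp_rpow_mul_rpow_of_mem_Ioc_right {ε p q t : ℝ} (ht : t ∈ Ioc ε 1) :
    |ramp ε t| ^ p * t ^ q = t ^ q := by
  simp [ramp, not_le.mpr ht.1]

lemma integral_abs_ramp_rpow_mul_rpow {ε p q : ℝ} (hε : ε ∈ Ioc 0 1) (hq : -1 < q)
    (hpq : -1 < p + q) :
    ∫ t in Ioc (0 : ℝ) 1, |ramp ε t| ^ p * t ^ q
      = ε ^ (q + 1) / (p + q + 1) + (1 - ε ^ (q + 1)) / (q + 1) := by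
  obtain ⟨hε0, hε1⟩ := hε
  have hleft : EqOn (fun t => |ramp ε t| ^ p * t ^ q) (fun t => ε ^ (-p) * t ^ (p + q))
      (Ioc 0 ε) := fun t ht => abs_ramp_rpow_mul_rpow_of_mem_Ioc_left hε0 ht
  have hright : EqOn (fun t => |ramp ε t| ^ p * t ^ q) (fun t => t ^ q) (Ioc ε 1) :=
    fun t ht => abs_ramp_rpow_mul_rpow_of_mem_Ioc_right ht
  have hint_left : IntegrableOn (fun t => |ramp ε t| ^ p * t ^ q) (Ioc 0 ε) :=
    (((intervalIntegral.intervalIntegrable_rpow' hpq).const_mul _).1).congr_fun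
      hleft.symm measurableSet_Ioc
  have hint_right : IntegrableOn (fun t => |ramp ε t| ^ p * t ^ q) (Ioc ε 1) :=
    (intervalIntegral.intervalIntegrable_rpow' hq).1.congr_fun hright.symm measurableSet_Ioc
  rw [← Ioc_union_Ioc_eq_Ioc hε0.le hε1, setIntegral_union (Ioc_disjoint_Ioc_of_le le_rfl)
      measurableSet_Ioc hint_left hint_right,
    setIntegral_congr_fun measurableSet_Ioc hleft, setIntegral_congr_fun measurableSet_Ioc hright,
    ← intervalIntegral.integral_of_le hε0.le, ← intervalIntegral.integral_of_le hε1,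
    intervalIntegral.integral_const_mul, integral_rpow (Or.inl hpq), integral_rpow (Or.inl hq),
    zero_rpow (by linarith), one_rpow, sub_zero, add_assoc, rpow_add hε0, rpow_neg hε0.le]
  field_simp

lemma tendsto_rpow_nhdsGT_zero {r : ℝ} (hr : 0 < r) :
    Tendsto (fun x : ℝ => x ^ r) (𝓝[>] 0) (𝓝 0) := by
  simpa [zero_rpow hr.ne'] using
    ((continuous_rpow_const hr.le).tendsto 0).mono_left nhdsWithin_le_nhds

lemma eventually_mem_Ioc_nhdsGT_zero : ∀ᶠ ε in 𝓝[>] (0 : ℝ), ε ∈ Ioc 0 1 :=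
  Ioc_mem_nhdsGT zero_lt_one

lemma tendsto_integral_abs_deriv_ramp_rpow_mul_rpow {p q : ℝ} (hp : p ≠ 0) (hq : -1 < q)
    (hpq : p < q + 1) :
    Tendsto (fun ε => ∫ t in Ioc (0 : ℝ) 1, |deriv (ramp ε) t| ^ p * t ^ q) (𝓝[>] 0)
      (𝓝 0) := by
  have h := (tendsto_rpow_nhdsGT_zero (sub_pos.mpr hpq)).div_const (q + 1)
  rw [zero_div] at h
  refine h.congr' ?_
  filter_upwards [eventually_mem_Ioc_nhdsGT_zero] with ε hε
  rw [integral_abs_deriv_ramp_rpow_mul_rpow hε hp hq]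

lemma tendsto_integral_abs_ramp_rpow_mul_rpow {p q : ℝ} (hq : -1 < q) (hpq : -1 < p + q) :
    Tendsto (fun ε => ∫ t in Ioc (0 : ℝ) 1, |ramp ε t| ^ p * t ^ q) (𝓝[>] 0)
      (𝓝 (1 / (q + 1))) := by
  have hpow := tendsto_rpow_nhdsGT_zero (neg_lt_iff_pos_add.mp hq)
  have h := (hpow.div_const (p + q + 1)).add
    (((tendsto_const_nhds (x := 1)).sub hpow).div_const (q + 1))
  rw [zero_div, zero_add, sub_zero] at h
  refine h.congr' ?_
  filter_upwards [eventually_mem_Ioc_nhdsGT_zero] with ε hε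
  rw [integral_abs_ramp_rpow_mul_rpow hε hq hpq]

/-- The test functions `u_ε(t) = min(t/ε, 1)` in the critical case `α > 1 - 1/p`. -/
theorem critical_test_functions (p α : ℝ) (hp : 1 < p) (hα : 1 - 1/p < α) :
    (∀ ε ∈ Ioo (0:ℝ) 1,
        (fun t : ℝ => if t ≤ ε then t / ε else 1) 0 = 0 ∧
        (fun t : ℝ => if t ≤ ε then t / ε else 1) 1 = 1) ∧
    Tendsto (fun ε : ℝ =>
        ∫ t in Ioc (0:ℝ) 1,
          |deriv (fun t : ℝ => if t ≤ ε then t / ε else 1) t| ^ p * t ^ (α * p))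
      (nhdsWithin 0 (Ioi 0)) (nhds 0) ∧
    Tendsto (fun ε : ℝ =>
        ∫ t in Ioc (0:ℝ) 1,
          |(fun t : ℝ => if t ≤ ε then t / ε else 1) t| ^ p * t ^ ((α - 1) * p))
      (nhdsWithin 0 (Ioi 0)) (nhds (1 / (α * p - p + 1))) ∧
    0 < 1 / (α * p - p + 1) := by
  have hp0 : 0 < p := one_pos.trans hp
  have hcrit : 0 < α * p - p + 1 := by
    have : p - 1 < α * p := by
      simpa [sub_mul, hp0.ne'] using mul_lt_mul_of_pos_right hα hp0
    linarith
  refine ⟨fun ε hε => ⟨by simp [hε.1.le], by simp [hε.2.not_ge]⟩,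
    tendsto_integral_abs_deriv_ramp_rpow_mul_rpow hp0.ne' (by linarith) (by linarith), ?_,
    one_div_pos.mpr hcrit⟩
  have h := tendsto_integral_abs_ramp_rpow_mul_rpow (p := p) (q := (α - 1) * p)
    (by linarith) (by linarith)
  rwa [show (α - 1) * p + 1 = α * p - p + 1 by ring] at h
end
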